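/- Perfect code bound: if r divides n, n/r ≠ 2, and C is a perfect single-error correcting r-regular multipermutation code (every r-regular multipermutation lies in exactly one sphere of radius 1 around a codeword multipermutation), then |C|_r ≥ n! / ((r!)^{n/r} · (1 + (n−1)² − (r−1)n)). -/

import Mathlib

/-!
Every `r`-regular multipermutation is `m_σ^r` for exactly `(r!)^{n/r}` permutations `σ`, and the
radius-one spheres around the codewords cover all multipermutations, so
`n! ≤ (r!)^{n/r} · |C|_r · (largest sphere)`.

A rearrangement `y` of `x` with `ℓ(x, y) ≥ n - 1` is a translocate `x ∘ φ(i, j)`: the common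
subsequence omits one position of each word, and the two omitted letters agree. Moving a letter
within its run, or next to an equal letter, gives the same word, so it suffices to count the
identity and the *reduced* translocations. When every letter occurs `r` times, the target of a
reduced translocation from `i` is one of the `n - r` positions carrying another letter, and for
all start positions but one (the end of the initial run) one of these targets is excluded. Hence
a sphere has at most `n (n - 1 - r) + 2 = 1 + (n - 1)² - (r - 1) n` elements.
-/

namespace UlamPaper

/-- Underlying function of the translocation `φ(i,j)` (0-indexed). -/
def tf (i j k : ℕ) : ℕ :=
  if i ≤ j then (if k < i ∨ j < k then k else if k = j then i else k + 1)
  else (if k < j ∨ i < k then k else if k = j then i else k - 1)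

theorem tf_lt {n i j k : ℕ} (hi : i < n) (hj : j < n) (hk : k < n) : tf i j k < n := by
  unfold tf; split_ifs <;> omega

theorem tf_tf (i j k : ℕ) : tf j i (tf i j k) = k := by
  unfold tf; split_ifs <;> omega

/-- The translocation `φ(i,j)` as a permutation of `Fin n`: it deletes the entry in
position `i` and reinserts it at position `j`, shifting intermediate entries. -/
def transloc {n : ℕ} (i j : Fin n) : Equiv.Perm (Fin n) where
  toFun k := ⟨tf i.val j.val k.val, tf_lt i.isLt j.isLt k.isLt⟩
  invFun k := ⟨tf j.val i.val k.val, tf_lt j.isLt i.isLt k.isLt⟩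
  left_inv k := Fin.ext (tf_tf i.val j.val k.val)
  right_inv k := Fin.ext (tf_tf j.val i.val k.val)

/-- `IsTransloc φ` : `φ` is a translocation. -/
def IsTransloc {n : ℕ} (φ : Equiv.Perm (Fin n)) : Prop := ∃ i j : Fin n, φ = transloc i j

/-- Length of the longest common subsequence of two `n`-length sequences. -/
noncomputable def lcsLen {n : ℕ} {α : Type*} (u v : Fin n → α) : ℕ :=
  sSup {k | ∃ f g : Fin k → Fin n, StrictMono f ∧ StrictMono g ∧ ∀ p, u (f p) = v (g p)}

/-- The Ulam distance `d(σ,π) = n - ℓ(σ,π)`. -/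
noncomputable def ulamDist {n : ℕ} (σ π : Equiv.Perm (Fin n)) : ℕ :=
  n - lcsLen (⇑σ) (⇑π)

/-- The `r`-regular multipermutation `m_σ^r` (with values in `[1, n/r]`). -/
def mult {n : ℕ} (r : ℕ) (σ : Equiv.Perm (Fin n)) : Fin n → ℕ :=
  fun i => (σ i).val / r + 1

/-- The `r`-regular Ulam distance, expressed as `n - ℓ(m_σ^r, m_π^r)`. -/
noncomputable def multDist {n : ℕ} (r : ℕ) (σ π : Equiv.Perm (Fin n)) : ℕ :=
  n - lcsLen (mult r σ) (mult r π)

/-- The `r`-regular Ulam sphere of radius `t` centered at `m_σ^r`. -/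
def multSphere {n : ℕ} (r : ℕ) (σ : Equiv.Perm (Fin n)) (t : ℕ) : Set (Fin n → ℕ) :=
  {x | ∃ π : Equiv.Perm (Fin n), x = mult r π ∧ multDist r σ π ≤ t}

open Finset

lemma exists_succAbove_eq_of_strictMono {m : ℕ} {f : Fin m → Fin (m + 1)} (hf : StrictMono f) :
    ∃ p : Fin (m + 1), f = p.succAbove := by
  classical
  obtain ⟨p, hp⟩ : ∃ p, (univ.image f)ᶜ = {p} := card_eq_one.mp <| by
    rw [card_compl, card_image_of_injective _ hf.injective]; simp
  have hfp : ∀ k, f k ∈ ({p}ᶜ : Finset _) := fun k => by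
    rw [← hp, compl_compl]; exact mem_image_of_mem f (mem_univ k)
  refine ⟨p, ?_⟩
  rw [orderEmbOfFin_unique (by simp [card_compl]) hfp hf,
    orderEmbOfFin_compl_singleton_eq_succAboveOrderEmb]
  rfl

lemma transloc_apply_right {n : ℕ} (i j : Fin n) : transloc i j j = i :=
  Fin.ext <| by simp [transloc, tf]; split_ifs <;> omega

lemma transloc_succAbove {m : ℕ} (i j : Fin (m + 1)) (p : Fin m) :
    transloc i j (j.succAbove p) = i.succAbove p := by
  ext
  simp only [Fin.succAbove, Fin.lt_def, Fin.val_castSucc]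
  split_ifs <;> simp only [transloc, Equiv.coe_fn_mk, Fin.val_castSucc, Fin.val_succ, tf] <;>
    split_ifs <;> omega

lemma exists_strictMono_of_le_lcsLen {n k : ℕ} {α : Type*} {u v : Fin n → α}
    (h : k ≤ lcsLen u v) :
    ∃ f g : Fin k → Fin n, StrictMono f ∧ StrictMono g ∧ ∀ p, u (f p) = v (g p) := by
  set S := {k | ∃ f g : Fin k → Fin n, StrictMono f ∧ StrictMono g ∧ ∀ p, u (f p) = v (g p)}
  have hS : S.Nonempty :=
    ⟨0, Fin.elim0, Fin.elim0, fun a => a.elim0, fun a => a.elim0, fun p => p.elim0⟩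
  have hbdd : BddAbove S :=
    ⟨n, fun k ⟨f, _, hf, _⟩ => by simpa using Fintype.card_le_of_injective f hf.injective⟩
  obtain ⟨f, g, hf, hg, hfg⟩ := Nat.sSup_mem hS hbdd
  exact ⟨f ∘ Fin.castLE h, g ∘ Fin.castLE h, hf.comp (Fin.strictMono_castLE h),
    hg.comp (Fin.strictMono_castLE h), fun p => hfg _⟩

lemma exists_eq_comp_transloc {m : ℕ} {α : Type*} {x y : Fin (m + 1) → α}
    (hxy : univ.val.map y = univ.val.map x) (h : m ≤ lcsLen x y) :
    ∃ i j, y = x ∘ transloc i j := by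
  obtain ⟨f, g, hf, hg, hfg⟩ := exists_strictMono_of_le_lcsLen h
  obtain ⟨i, rfl⟩ := exists_succAbove_eq_of_strictMono hf
  obtain ⟨j, rfl⟩ := exists_succAbove_eq_of_strictMono hg
  have hyj : y j = x i := by
    have hsplit (z : Fin (m + 1) → α) (q : Fin (m + 1)) :
        univ.val.map z = z q ::ₘ univ.val.map (z ∘ q.succAbove) := by
      rw [Fin.univ_succAbove _ q, cons_val, Multiset.map_cons, map_val, Multiset.map_map]
      rfl
    have hrest : y ∘ j.succAbove = x ∘ i.succAbove := funext fun p => (hfg p).symm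
    rwa [hsplit y j, hsplit x i, hrest, Multiset.cons_inj_left] at hxy
  refine ⟨i, j, funext fun k => ?_⟩
  rcases eq_or_ne k j with rfl | hk
  · simp [transloc_apply_right, hyj]
  · obtain ⟨p, rfl⟩ := Fin.exists_succAbove_eq hk
    simp [transloc_succAbove, hfg]

section Counting

variable {α : Type*} (s : ℕ → α)

/-- Moving the letter at `i` to `j` is reduced if it cannot be replaced by a shorter move with
the same effect on `s`: the letter differs from its neighbour in the direction of the move and
from the letter at the target. The move `(j + 1, j)` is excluded as it equals `(j, j + 1)`. -/
def IsReducedTransloc (i j : ℕ) : Prop :=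
  (i < j ∧ s i ≠ s (i + 1) ∧ s i ≠ s j) ∨ (j + 1 < i ∧ s i ≠ s (i - 1) ∧ s i ≠ s j)

instance [DecidableEq α] : DecidableRel (IsReducedTransloc s) := fun _ _ => by
  unfold IsReducedTransloc; infer_instance

variable {s}

lemma comp_eq_comp_of_forall_eq_or_swap {a b : ℕ} (hab : s a = s b) {f g : ℕ → ℕ}
    (hfg : ∀ k, f k = g k ∨ f k = a ∧ g k = b ∨ f k = b ∧ g k = a) : s ∘ f = s ∘ g := by
  funext k
  rcases hfg k with h | ⟨h₁, h₂⟩ | ⟨h₁, h₂⟩ <;> simp [*]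

lemma comp_tf_eq_self_or_reduced {n i j : ℕ} (hi : i < n) (hj : j < n) :
    s ∘ tf i j = s ∨ ∃ a < n, ∃ b < n, IsReducedTransloc s a b ∧ s ∘ tf i j = s ∘ tf a b := by
  -- The weight `3` on leftward moves makes trading `(j + 1, j)` for `(j, j + 1)` a descent.
  induction hN : 2 * (j - i) + 3 * (i - j) using Nat.strong_induction_on generalizing i j with
  | _ N ih =>
  have shorten : ∀ i' < n, ∀ j' < n, 2 * (j' - i') + 3 * (i' - j') < N →
      s ∘ tf i j = s ∘ tf i' j' →
      s ∘ tf i j = s ∨ ∃ a < n, ∃ b < n, IsReducedTransloc s a b ∧ s ∘ tf i j = s ∘ tf a b := by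
    intro i' hi' j' hj' hlt heq
    rw [heq]
    exact ih _ hlt hi' hj' rfl
  rcases lt_trichotomy i j with hij | rfl | hij
  · by_cases hnext : s i = s (i + 1)
    · exact shorten (i + 1) (by omega) j hj (by omega) <|
        comp_eq_comp_of_forall_eq_or_swap hnext fun k => by unfold tf; split_ifs <;> omega
    by_cases htarget : s i = s j
    · exact shorten i hi (j - 1) (by omega) (by omega) <|
        comp_eq_comp_of_forall_eq_or_swap htarget fun k => by unfold tf; split_ifs <;> omega
    exact Or.inr ⟨i, hi, j, hj, Or.inl ⟨hij, hnext, htarget⟩, rfl⟩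
  · left
    funext k
    simp only [Function.comp_apply, tf]
    split_ifs <;> congr 1 <;> omega
  · by_cases hadj : i = j + 1
    · subst hadj
      exact shorten j hj (j + 1) hi (by omega) <|
        congrArg (s ∘ ·) (funext fun k => by unfold tf; split_ifs <;> omega)
    by_cases hprev : s i = s (i - 1)
    · exact shorten (i - 1) (by omega) j hj (by omega) <|
        comp_eq_comp_of_forall_eq_or_swap hprev fun k => by unfold tf; split_ifs <;> omega
    by_cases htarget : s i = s j
    · exact shorten i hi (j + 1) (by omega) (by omega) <|
        comp_eq_comp_of_forall_eq_or_swap htarget fun k => by unfold tf; split_ifs <;> omega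
    exact Or.inr ⟨i, hi, j, hj, Or.inr ⟨by omega, hprev, htarget⟩, rfl⟩

variable [DecidableEq α] {n r : ℕ}

lemma filter_isReducedTransloc_subset (i : ℕ) :
    {j ∈ range n | IsReducedTransloc s i j} ⊆ {j ∈ range n | s j ≠ s i} := by
  intro j hj
  simp only [mem_filter] at hj ⊢
  rcases hj.2 with ⟨-, -, h⟩ | ⟨-, -, h⟩ <;> exact ⟨hj.1, Ne.symm h⟩

lemma card_filter_ne_eq (hfib : ∀ i < n, #{j ∈ range n | s j = s i} = r) {i : ℕ} (hi : i < n) :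
    #{j ∈ range n | s j ≠ s i} = n - r := by
  rw [filter_not, card_sdiff_of_subset (filter_subset _ _), hfib i hi, card_range]

lemma card_reduced_le (hfib : ∀ i < n, #{j ∈ range n | s j = s i} = r) {i : ℕ} (hi : i < n) :
    #{j ∈ range n | IsReducedTransloc s i j} ≤ n - r :=
  card_filter_ne_eq hfib hi ▸ card_le_card (filter_isReducedTransloc_subset i)

lemma card_reduced_lt (hfib : ∀ i < n, #{j ∈ range n | s j = s i} = r) {i m : ℕ} (hi : i < n)
    (hm : m < n) (hsm : s m ≠ s i) (hred : ¬ IsReducedTransloc s i m) :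
    #{j ∈ range n | IsReducedTransloc s i j} < n - r :=
  card_filter_ne_eq hfib hi ▸ card_lt_card ((ssubset_iff_of_subset
    (filter_isReducedTransloc_subset i)).mpr ⟨m, by simp [hm, hsm], by simp [hred]⟩)

lemma forall_le_eq_and_ne_succ_of_lt_card_reduced
    (hfib : ∀ i < n, #{j ∈ range n | s j = s i} = r) {i : ℕ} (hi : i < n)
    (h : n - r - 1 < #{j ∈ range n | IsReducedTransloc s i j}) :
    (∀ m ≤ i, s m = s i) ∧ s i ≠ s (i + 1) := by
  obtain ⟨j, -, hj⟩ : ∃ j ∈ range n, IsReducedTransloc s i j :=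
    filter_nonempty_iff.mp (card_pos.mp (Nat.zero_lt_of_lt h))
  have hprev : s i = s (i - 1) := by
    by_contra hne
    have hi0 : i ≠ 0 := by rintro rfl; exact hne rfl
    have := card_reduced_lt hfib hi (by omega) (Ne.symm hne) fun hred => by
      rcases hred with ⟨h, -⟩ | ⟨h, -⟩ <;> omega
    omega
  refine ⟨fun m hm => ?_, ?_⟩
  · by_contra hne
    have := card_reduced_lt hfib hi (by omega) hne fun hred => by
      rcases hred with ⟨h, -⟩ | ⟨-, h, -⟩
      · omega
      · exact h hprev
    omega
  · rcases hj with ⟨-, h, -⟩ | ⟨-, h, -⟩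
    · exact h
    · exact absurd hprev h

lemma sum_card_reduced_le (hfib : ∀ i < n, #{j ∈ range n | s j = s i} = r) :
    ∑ i ∈ range n, #{j ∈ range n | IsReducedTransloc s i j} ≤ n * (n - r - 1) + 1 := by
  set q := fun i => #{j ∈ range n | IsReducedTransloc s i j}
  have hexceptional : #{i ∈ range n | n - r - 1 < q i} ≤ 1 := by
    refine card_le_one.mpr fun i hi i' hi' => ?_
    simp only [mem_filter, mem_range] at hi hi'
    have hrun := forall_le_eq_and_ne_succ_of_lt_card_reduced hfib hi.1 hi.2
    have hrun' := forall_le_eq_and_ne_succ_of_lt_card_reduced hfib hi'.1 hi'.2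
    by_contra hne
    rcases Nat.lt_or_gt_of_ne hne with hlt | hlt
    · exact hrun.2 ((hrun'.1 i hlt.le).trans (hrun'.1 (i + 1) hlt).symm)
    · exact hrun'.2 ((hrun.1 i' hlt.le).trans (hrun.1 (i' + 1) hlt).symm)
  calc ∑ i ∈ range n, q i
      ≤ ∑ i ∈ range n, ((n - r - 1) + if n - r - 1 < q i then 1 else 0) := by
        refine sum_le_sum fun i hi => ?_
        have : q i ≤ n - r := card_reduced_le hfib (mem_range.mp hi)
        split_ifs <;> omega
    _ = n * (n - r - 1) + #{i ∈ range n | n - r - 1 < q i} := by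
        rw [sum_add_distrib, sum_const, card_range, smul_eq_mul, sum_boole, Nat.cast_id]
    _ ≤ n * (n - r - 1) + 1 := by omega

open scoped Classical in
lemma card_image_comp_tf_le (hfib : ∀ i < n, #{j ∈ range n | s j = s i} = r) :
    #((range n ×ˢ range n).image fun p => s ∘ tf p.1 p.2) ≤ n * (n - r - 1) + 2 := by
  have hsub : (range n ×ˢ range n).image (fun p => s ∘ tf p.1 p.2) ⊆
      insert s ({p ∈ range n ×ˢ range n | IsReducedTransloc s p.1 p.2}.image
        fun p => s ∘ tf p.1 p.2) := by
    intro y hy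
    obtain ⟨⟨i, j⟩, hij, rfl⟩ := mem_image.mp hy
    simp only [mem_product, mem_range] at hij
    rcases comp_tf_eq_self_or_reduced hij.1 hij.2 with h | ⟨a, ha, b, hb, hab, h⟩
    · exact mem_insert.mpr (Or.inl h)
    · exact mem_insert_of_mem (mem_image.mpr ⟨(a, b), by simp [ha, hb, hab], h.symm⟩)
  have hpairs : #{p ∈ range n ×ˢ range n | IsReducedTransloc s p.1 p.2} =
      ∑ i ∈ range n, #{j ∈ range n | IsReducedTransloc s i j} := by
    simp only [card_eq_sum_ones, sum_filter, sum_product]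
  calc _ ≤ _ := card_le_card hsub
    _ ≤ #{p ∈ range n ×ˢ range n | IsReducedTransloc s p.1 p.2} + 1 :=
        (card_insert_le _ _).trans (Nat.add_le_add_right card_image_le 1)
    _ ≤ n * (n - r - 1) + 2 := by
        have := sum_card_reduced_le hfib
        omega

end Counting

lemma card_filter_fin_eq_card_filter_range {n : ℕ} (p : ℕ → Prop) [DecidablePred p] :
    #{k : Fin n | p k} = #{j ∈ range n | p j} := by
  rw [← Nat.Iio_eq_range, ← Fin.map_valEmbedding_univ, filter_map, card_map]
  rfl

lemma card_filter_div_eq {n r v : ℕ} (hr : 0 < r) (hdvd : r ∣ n) (hv : v < n / r) :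
    #{k : Fin n | k.val / r = v} = r := by
  have hblock : v * r + r ≤ n := by
    have := Nat.mul_le_mul_right r (Nat.succ_le_of_lt hv)
    rwa [Nat.div_mul_cancel hdvd, Nat.succ_mul] at this
  have hIco : {j ∈ range n | j / r = v} = Ico (v * r) (v * r + r) := by
    ext j
    have hle := Nat.le_div_iff_mul_le hr (x := v) (y := j)
    have hlt := Nat.div_lt_iff_lt_mul hr (x := j) (y := v + 1)
    rw [Nat.succ_mul] at hlt
    simp only [mem_filter, mem_range, mem_Ico]
    omega
  rw [card_filter_fin_eq_card_filter_range (· / r = v), hIco, Nat.card_Ico, Nat.add_sub_cancel_left]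

lemma mult_eq_mult_iff {n r : ℕ} {σ τ : Equiv.Perm (Fin n)} :
    mult r σ = mult r τ ↔ ∀ k, (σ k).val / r = (τ k).val / r := by
  simp [funext_iff, mult]

lemma map_univ_val_mult_eq {n r : ℕ} (σ τ : Equiv.Perm (Fin n)) :
    univ.val.map (mult r σ) = univ.val.map (mult r τ) := by
  have (π : Equiv.Perm (Fin n)) :
      univ.val.map (mult r π) = univ.val.map fun k : Fin n => k.val / r + 1 := by
    rw [show mult r π = (fun k : Fin n => k.val / r + 1) ∘ π from rfl, ← Multiset.map_map,
      Multiset.map_univ_val_equiv]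
  rw [this, this]

lemma card_filter_mult_eq {n r : ℕ} (hr : 0 < r) (hdvd : r ∣ n) (c : Equiv.Perm (Fin n))
    (i : Fin n) : #{k | mult r c k = mult r c i} = r := by
  calc #{k | mult r c k = mult r c i} = #{k : Fin n | k.val / r = (c i).val / r} := by
        rw [← Fintype.card_subtype, ← Fintype.card_subtype]
        exact Fintype.card_congr (c.subtypeEquiv fun k => by simp [mult])
    _ = r := card_filter_div_eq hr hdvd (Nat.div_lt_div_of_lt_of_dvd hdvd (c i).isLt)

lemma card_filter_mult_eq_mult_le {n r : ℕ} (hr : 0 < r) (hdvd : r ∣ n)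
    (σ₀ : Equiv.Perm (Fin n)) : #{σ | mult r σ = mult r σ₀} ≤ r.factorial ^ (n / r) := by
  classical
  set block : Fin n → Fin (n / r) := fun k => ⟨k / r, Nat.div_lt_div_of_lt_of_dvd hdvd k.isLt⟩
  calc #{σ | mult r σ = mult r σ₀}
      ≤ #{g : Equiv.Perm (Fin n) | block ∘ g = block} := by
        refine card_le_card_of_injOn (· * σ₀⁻¹) (fun σ hσ => ?_) (mul_left_injective _).injOn
        simp only [coe_filter, Set.mem_ofPred_eq, mem_univ, true_and, mult_eq_mult_iff] at hσ ⊢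
        funext k
        simpa [block] using hσ (σ₀⁻¹ k)
    _ = ∏ v, (Fintype.card {k // block k = v}).factorial := by
        rw [← Fintype.card_subtype, DomMulAct.stabilizer_card]
    _ = r.factorial ^ (n / r) := by
        have hfiber (v : Fin (n / r)) : Fintype.card {k // block k = v} = r := by
          rw [Fintype.card_subtype]
          simpa [block, Fin.ext_iff] using card_filter_div_eq hr hdvd v.isLt
        simp [hfiber]

lemma factorial_le_mul_card_image_mult {n r : ℕ} (hr : 0 < r) (hdvd : r ∣ n) :
    n.factorial ≤ r.factorial ^ (n / r) * #(univ.image (mult r : Equiv.Perm (Fin n) → _)) := by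
  classical
  calc n.factorial = #(univ : Finset (Equiv.Perm (Fin n))) := by simp [Fintype.card_perm]
    _ ≤ _ := card_le_mul_card_image _ _ fun y hy => ?_
  obtain ⟨σ₀, -, rfl⟩ := mem_image.mp hy
  simpa using card_filter_mult_eq_mult_le hr hdvd σ₀

lemma mul_sub_add_two_eq {n r : ℕ} (hr : 0 < r) (hrn : r < n) :
    n * (n - r - 1) + 2 = 1 + (n - 1) ^ 2 - (r - 1) * n := by
  obtain ⟨d, rfl⟩ := Nat.exists_eq_add_of_lt hrn
  obtain ⟨r, rfl⟩ := Nat.exists_eq_add_of_lt hr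
  simp only [Nat.add_sub_cancel, Nat.zero_add, show r + 1 + d + 1 - (r + 1) - 1 = d by omega]
  refine (Nat.sub_eq_of_eq_add ?_).symm
  ring

open scoped Classical in
lemma card_ball_mult_le {n r : ℕ} (hr : 0 < r) (hdvd : r ∣ n) (hrn : r < n)
    (c : Equiv.Perm (Fin n)) :
    #{y ∈ univ.image (mult r) | n ≤ lcsLen (mult r c) y + 1} ≤ 1 + (n - 1) ^ 2 - (r - 1) * n := by
  rw [← mul_sub_add_two_eq hr hrn]
  obtain ⟨m, rfl⟩ : ∃ m, n = m + 1 := ⟨n - 1, by omega⟩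
  -- `m_c^r` read on positions in `ℕ`; the value `0` past the end is never looked at.
  set s : ℕ → ℕ := fun k => if h : k < m + 1 then mult r c ⟨k, h⟩ else 0
  have hfib : ∀ i < m + 1, #{j ∈ range (m + 1) | s j = s i} = r := by
    intro i hi
    have hs (k : Fin (m + 1)) : s k = mult r c k := dif_pos k.isLt
    rw [← card_filter_fin_eq_card_filter_range, show s i = mult r c ⟨i, hi⟩ from dif_pos hi]
    simpa only [hs] using card_filter_mult_eq hr hdvd c ⟨i, hi⟩
  have hsub : {y ∈ univ.image (mult r) | m + 1 ≤ lcsLen (mult r c) y + 1} ⊆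
      ((range (m + 1) ×ˢ range (m + 1)).image fun p => s ∘ tf p.1 p.2).image
        fun h (k : Fin (m + 1)) => h k := by
    intro y hy
    simp only [mem_filter, mem_image, mem_univ, true_and] at hy
    obtain ⟨⟨π, rfl⟩, hlcs⟩ := hy
    obtain ⟨i, j, hij⟩ := exists_eq_comp_transloc (map_univ_val_mult_eq (r := r) π c) (by omega)
    refine mem_image.mpr ⟨s ∘ tf i j, mem_image.mpr ⟨(i, j),
      mem_product.mpr ⟨mem_range.mpr i.isLt, mem_range.mpr j.isLt⟩, rfl⟩, ?_⟩
    rw [hij]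
    funext k
    exact dif_pos (tf_lt i.isLt j.isLt k.isLt)
  calc _ ≤ _ := card_le_card hsub
    _ ≤ _ := card_image_le
    _ ≤ _ := card_image_comp_tf_le hfib

open scoped Classical in
lemma card_image_mult_le_of_cover {n r : ℕ} (hr : 0 < r) (hdvd : r ∣ n) (hrn : r < n)
    (C : Set (Equiv.Perm (Fin n))) (hcover : ∀ σ, ∃ c ∈ C, mult r σ ∈ multSphere r c 1) :
    #(univ.image (mult r : Equiv.Perm (Fin n) → Fin n → ℕ)) ≤
      {x | ∃ c ∈ C, x = mult r c}.ncard * (1 + (n - 1) ^ 2 - (r - 1) * n) := by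
  set codewords := {c ∈ (univ : Finset (Equiv.Perm (Fin n))) | c ∈ C}.image (mult r)
  have hcodewords : {x | ∃ c ∈ C, x = mult r c} = codewords := by
    ext x
    simp [codewords, eq_comm]
  rw [hcodewords, Set.ncard_coe_finset]
  refine (card_le_card fun y hy => ?_).trans (card_biUnion_le_card_mul codewords
    (fun x => {y ∈ univ.image (mult r) | n ≤ lcsLen x y + 1}) _ ?_)
  · obtain ⟨σ, -, rfl⟩ := mem_image.mp hy
    obtain ⟨c, hc, π, hπ, hdist⟩ := hcover σ
    refine mem_biUnion.mpr ⟨mult r c, mem_image_of_mem _ (by simpa using hc), ?_⟩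
    rw [multDist] at hdist
    rw [hπ]
    exact mem_filter.mpr ⟨mem_image_of_mem _ (mem_univ π), by omega⟩
  · intro x hx
    obtain ⟨c, -, rfl⟩ := mem_image.mp hx
    exact card_ball_mult_le hr hdvd hrn c

lemma factorial_div_le_one_of_le {n r : ℕ} (hr : 0 < r) (hdvd : r ∣ n) (hnr : n ≤ r) :
    n.factorial / (r.factorial ^ (n / r) * (1 + (n - 1) ^ 2 - (r - 1) * n)) ≤ 1 := by
  rcases Nat.eq_zero_or_pos n with rfl | hn
  · simp
  obtain rfl : n = r := le_antisymm hnr (Nat.le_of_dvd hn hdvd)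
  obtain ⟨k, rfl⟩ := Nat.exists_eq_add_of_lt hr
  rcases k with _ | k
  · simp
  · have : 1 + (k + 1) ^ 2 - (k + 1) * (k + 2) = 0 := by
      rw [Nat.sub_eq_zero_iff_le]; nlinarith
    simp [this]

theorem perfect_code_bound_general {n r : ℕ} (hr : 0 < r) (hdvd : r ∣ n)
    (C : Set (Equiv.Perm (Fin n)))
    (hperfect : ∀ σ : Equiv.Perm (Fin n),
      ∃! x : Fin n → ℕ, ∃ c ∈ C, x = mult r c ∧ mult r σ ∈ multSphere r c 1) :
    n.factorial / (r.factorial ^ (n / r) * (1 + (n - 1) ^ 2 - (r - 1) * n)) ≤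
      {x : Fin n → ℕ | ∃ c ∈ C, x = mult r c}.ncard := by
  have hcover (σ : Equiv.Perm (Fin n)) : ∃ c ∈ C, mult r σ ∈ multSphere r c 1 := by
    obtain ⟨-, ⟨c, hc, -, hσ⟩, -⟩ := hperfect σ
    exact ⟨c, hc, hσ⟩
  rcases Nat.lt_or_ge r n with hrn | hnr
  · refine Nat.div_le_of_le_mul ?_
    calc n.factorial ≤ r.factorial ^ (n / r) * #(univ.image (mult r)) :=
          factorial_le_mul_card_image_mult hr hdvd
      _ ≤ r.factorial ^ (n / r) * ({x | ∃ c ∈ C, x = mult r c}.ncard *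
            (1 + (n - 1) ^ 2 - (r - 1) * n)) :=
          Nat.mul_le_mul_left _ (card_image_mult_le_of_cover hr hdvd hrn C hcover)
      _ = _ := by ring
  · obtain ⟨c, hc, -⟩ := hcover 1
    have hfin : {x | ∃ c ∈ C, x = mult r c}.Finite :=
      (Set.finite_range (mult r)).subset fun x ⟨c, _, hx⟩ => ⟨c, hx.symm⟩
    exact (factorial_div_le_one_of_le hr hdvd hnr).trans
      ((Set.ncard_pos hfin).mpr ⟨_, c, hc, rfl⟩)

/-- Perfect code bound: a perfect single-error correcting `r`-regular
multipermutation code (with `n/r ≠ 2`) satisfies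
`|C|_r ≥ n! / ((r!)^{n/r} · (1 + (n−1)² − (r−1)n))`. -/
theorem perfect_code_bound {n r : ℕ} (hr : 0 < r) (hdvd : r ∣ n) (hnr : n / r ≠ 2)
    (C : Set (Equiv.Perm (Fin n)))
    (hclosed : ∀ c ∈ C, ∀ σ : Equiv.Perm (Fin n), mult r σ = mult r c → σ ∈ C)
    (hperfect : ∀ σ : Equiv.Perm (Fin n),
      ∃! x : Fin n → ℕ, ∃ c ∈ C, x = mult r c ∧ mult r σ ∈ multSphere r c 1) :
    n.factorial / (r.factorial ^ (n / r) * (1 + (n - 1) ^ 2 - (r - 1) * n)) ≤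
      {x : Fin n → ℕ | ∃ c ∈ C, x = mult r c}.ncard :=
  perfect_code_bound_general hr hdvd C hperfect

end UlamPaper
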